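/- arXiv:2603.26443 — 3 statements merged into one kernel-verified Lean document; each statement's English description precedes it below -/
import Mathlib

section
/- Let q ≥ 2 and μ ∈ ℂ with μ ∉ {0, 1, -1}. Define K_μ : ℤ × ℤ → ℂ by K_μ(k₁,k₂) = -(2/(μ-μ⁻¹)) · (√q/μ)^{|k₁-k₂|} · q^{min(k₁,k₂)}. Then for all k₁, k₂ ∈ ℤ: q^{k₂}·δ_{k₂}(k₁) = (√q/2)·K_μ(k₁-1,k₂) + (1/(2√q))·K_μ(k₁+1,k₂) - ((μ+μ⁻¹)/2)·K_μ(k₁,k₂), where δ_{k₂}(k₁) = 1 if k₁ = k₂ and 0 otherwise. -/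
/-- The kernel identity for the resolvent of the normalized adjacency operator on the
idealized parabolic cylinder `Z` (vertex set `ℤ`, `(Af)(k) = q·f(k-1) + f(k+1)`,
vertex `k` carrying measure `q^k`). -/
theorem stmt_2 (q : ℕ) (hq : 2 ≤ q) (μ : ℂ) (h0 : μ ≠ 0) (h1 : μ ≠ 1) (h2 : μ ≠ -1)
    (k₁ k₂ : ℤ) :
    let sq : ℂ := (Real.sqrt q : ℝ)
    let K : ℤ → ℤ → ℂ := fun a b =>
      -(2 / (μ - μ⁻¹)) * (sq / μ) ^ (a - b).natAbs * (q : ℂ) ^ (min a b)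
    (q : ℂ) ^ k₂ * (if k₁ = k₂ then 1 else 0) =
      (sq / 2) * K (k₁ - 1) k₂ + (1 / (2 * sq)) * K (k₁ + 1) k₂
        - ((μ + μ⁻¹) / 2) * K k₁ k₂ := by
  intro sq K
  have hq0 : (q : ℂ) ≠ 0 := Nat.cast_ne_zero.mpr (by omega)
  have hsq : sq * sq = (q : ℂ) := by
    have h : Real.sqrt q * Real.sqrt q = q := Real.mul_self_sqrt (by positivity)
    show ((Real.sqrt q : ℝ) : ℂ) * ((Real.sqrt q : ℝ) : ℂ) = (q : ℂ)
    exact_mod_cast h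
  have hsq0 : sq ≠ 0 := by
    intro h; apply hq0; rw [← hsq, h, mul_zero]
  have hμ2 : μ * μ - 1 ≠ 0 := by
    intro h
    have h' : (μ - 1) * (μ + 1) = 0 := by linear_combination h
    rcases mul_eq_zero.mp h' with h'' | h''
    · exact h1 (by linear_combination h'')
    · exact h2 (by linear_combination h'')
  have hd : μ - μ⁻¹ = (μ * μ - 1) / μ := by field_simp
  have hμμ0 : μ - μ⁻¹ ≠ 0 := by rw [hd]; exact div_ne_zero hμ2 h0
  have hdd : (μ - μ⁻¹) * (μ - μ⁻¹)⁻¹ = 1 := mul_inv_cancel₀ hμμ0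
  have hμ : μ * μ⁻¹ = 1 := mul_inv_cancel₀ h0
  have hs : sq * sq⁻¹ = 1 := mul_inv_cancel₀ hsq0
  have hqq : (q : ℂ) * ((q : ℂ))⁻¹ = 1 := mul_inv_cancel₀ hq0
  rcases lt_trichotomy k₁ k₂ with h | h | h
  · obtain ⟨n, hn⟩ : ∃ n : ℕ, k₂ = k₁ + (n + 1) := ⟨(k₂ - k₁ - 1).toNat, by omega⟩
    subst hn
    simp only [K]
    rw [show (k₁ - 1 - (k₁ + ((n : ℤ) + 1))).natAbs = n + 2 by omega,
        show (k₁ + 1 - (k₁ + ((n : ℤ) + 1))).natAbs = n by omega,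
        show (k₁ - (k₁ + ((n : ℤ) + 1))).natAbs = n + 1 by omega,
        show min (k₁ - 1) (k₁ + ((n : ℤ) + 1)) = k₁ - 1 by omega,
        show min (k₁ + 1) (k₁ + ((n : ℤ) + 1)) = k₁ + 1 by omega,
        show min k₁ (k₁ + ((n : ℤ) + 1)) = k₁ by omega,
        if_neg (by omega : ¬ k₁ = k₁ + ((n : ℤ) + 1))]
    rw [zpow_sub_one₀ hq0, zpow_add_one₀ hq0, pow_succ, pow_succ]
    have key : sq / 2 * ((sq / μ) * (sq / μ)) * ((q : ℂ))⁻¹ + 1 / (2 * sq) * (q : ℂ)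
        = (μ + μ⁻¹) / 2 * (sq / μ) := by
      linear_combination (μ⁻¹ ^ 2 * ((q : ℂ))⁻¹ * sq / 2 - sq⁻¹ / 2) * hsq
        + (sq * μ⁻¹ ^ 2 / 2) * hqq + (sq / 2) * hs - (sq / 2) * hμ
    linear_combination (2 / (μ - μ⁻¹) * (sq / μ) ^ n * (q : ℂ) ^ k₁) * key
  · subst h
    simp only [K]
    rw [show (k₁ - 1 - k₁).natAbs = 1 by omega,
        show (k₁ + 1 - k₁).natAbs = 1 by omega,
        show (k₁ - k₁).natAbs = 0 by omega,
        show min (k₁ - 1) k₁ = k₁ - 1 by omega,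
        show min (k₁ + 1) k₁ = k₁ by omega,
        min_self]
    rw [if_true]
    rw [zpow_sub_one₀ hq0]
    have key : sq / 2 * (sq / μ) * ((q : ℂ))⁻¹ + 1 / (2 * sq) * (sq / μ) = μ⁻¹ := by
      linear_combination (μ⁻¹ * ((q : ℂ))⁻¹ / 2) * hsq + (μ⁻¹ / 2) * hqq + (μ⁻¹ / 2) * hs
    linear_combination ((q : ℂ) ^ k₁ * (2 / (μ - μ⁻¹))) * key - (q : ℂ) ^ k₁ * hdd
  · obtain ⟨n, hn⟩ : ∃ n : ℕ, k₁ = k₂ + (n + 1) := ⟨(k₁ - k₂ - 1).toNat, by omega⟩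
    subst hn
    simp only [K]
    rw [show (k₂ + ((n : ℤ) + 1) - 1 - k₂).natAbs = n by omega,
        show (k₂ + ((n : ℤ) + 1) + 1 - k₂).natAbs = n + 2 by omega,
        show (k₂ + ((n : ℤ) + 1) - k₂).natAbs = n + 1 by omega,
        show min (k₂ + ((n : ℤ) + 1) - 1) k₂ = k₂ by omega,
        show min (k₂ + ((n : ℤ) + 1) + 1) k₂ = k₂ by omega,
        show min (k₂ + ((n : ℤ) + 1)) k₂ = k₂ by omega,
        if_neg (by omega : ¬ k₂ + ((n : ℤ) + 1) = k₂)]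
    rw [pow_succ, pow_succ]
    have key : sq / 2 + 1 / (2 * sq) * ((sq / μ) * (sq / μ))
        = (μ + μ⁻¹) / 2 * (sq / μ) := by
      linear_combination (sq * μ⁻¹ ^ 2 / 2) * hs - (sq / 2) * hμ
    linear_combination (2 / (μ - μ⁻¹) * (sq / μ) ^ n * (q : ℂ) ^ k₂) * key
end

section
/- Let q ≥ 2 be an integer and N ≥ 1. Consider the N×N circulant matrix H(μ) over ℂ whose first row is [(q-1)/(2qμ) - (μ+μ⁻¹)/2, 1/(2√q), 0, …, 0, 1/(2√q)]. Then det H(μ) = ∏_{j=0}^{N-1} ((q-1)/(2qμ) - (μ+μ⁻¹)/2 + (1/√q)·cos(2πj/N)), and det H(μ) = 0 if and only if μ = (1/√q)·e^{2πij/N} for some j ∈ {0,…,N-1} (for μ in ℂ \ {0}). -/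
open scoped Real

namespace Stmt5Aux

noncomputable def zeta (N : ℕ) : ℂ := Complex.exp (2 * π * Complex.I / N)

lemma zeta_prim (N : ℕ) [NeZero N] : IsPrimitiveRoot (zeta N) N :=
  Complex.isPrimitiveRoot_exp N (NeZero.ne N)

lemma zeta_pow_N (N : ℕ) [NeZero N] : zeta N ^ N = 1 := (zeta_prim N).pow_eq_one

lemma zeta_pow_mod (N : ℕ) [NeZero N] (x : ℕ) : zeta N ^ (x % N) = zeta N ^ x := by
  conv_rhs => rw [← Nat.mod_add_div x N, pow_add, pow_mul, zeta_pow_N, one_pow, mul_one]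

noncomputable def che (N : ℕ) (a : ZMod N) : ℂ := zeta N ^ a.val

lemma che_natCast (N : ℕ) [NeZero N] (x : ℕ) : che N (x : ZMod N) = zeta N ^ x := by
  rw [che, ZMod.val_natCast, zeta_pow_mod]

lemma che_add (N : ℕ) [NeZero N] (a b : ZMod N) :
    che N (a + b) = che N a * che N b := by
  have h : a + b = ((a.val + b.val : ℕ) : ZMod N) := by
    push_cast [ZMod.natCast_rightInverse a, ZMod.natCast_rightInverse b]
    rfl
  rw [h, che_natCast, pow_add]
  rfl

lemma che_zero (N : ℕ) [NeZero N] : che N 0 = 1 := by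
  have : ((0 : ℕ) : ZMod N) = 0 := by simp
  rw [← this, che_natCast, pow_zero]

lemma che_neg (N : ℕ) [NeZero N] (a : ZMod N) : che N (-a) = (che N a)⁻¹ := by
  have h : che N a * che N (-a) = 1 := by
    rw [← che_add]; simp [che_zero]
  exact eq_inv_of_mul_eq_one_right h

lemma che_ne_zero (N : ℕ) [NeZero N] (a : ZMod N) : che N a ≠ 0 :=
  pow_ne_zero _ (Complex.exp_ne_zero _)

def finEquiv (N : ℕ) [NeZero N] : Fin N ≃ ZMod N where
  toFun i := ((i : ℕ) : ZMod N)
  invFun a := ⟨a.val, a.val_lt⟩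
  left_inv i := Fin.ext (ZMod.val_natCast_of_lt i.isLt)
  right_inv a := ZMod.natCast_rightInverse a

lemma det_circulant_eq (N : ℕ) [NeZero N] (v : ZMod N → ℂ) :
    (Matrix.circulant v).det = ∏ j : ZMod N, ∑ m : ZMod N, v m * che N (-(m * j)) := by
  classical
  set W : Matrix (ZMod N) (ZMod N) ℂ := Matrix.of fun a b => che N (a * b) with hW
  set lam : ZMod N → ℂ := fun j => ∑ m : ZMod N, v m * che N (-(m * j)) with hlam
  have key : Matrix.circulant v * W = W * Matrix.diagonal lam := by
    ext i j
    rw [Matrix.mul_diagonal, Matrix.mul_apply]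
    simp only [hW, Matrix.of_apply, Matrix.circulant_apply, hlam]
    rw [Finset.mul_sum]
    refine Fintype.sum_equiv (Equiv.subLeft i) _ _ (fun m => ?_)
    simp only [Equiv.subLeft_apply]
    have h1 : -((i - m) * j) = m * j + -(i * j) := by ring
    rw [h1, che_add, che_neg]
    field_simp [che_ne_zero]
  have hWdet : W.det ≠ 0 := by
    rw [← Matrix.det_submatrix_equiv_self (finEquiv N) W]
    have hsub : W.submatrix (finEquiv N) (finEquiv N)
        = Matrix.vandermonde (fun i : Fin N => zeta N ^ (i : ℕ)) := by
      ext i j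
      simp only [Matrix.submatrix_apply, hW, Matrix.of_apply, Matrix.vandermonde_apply]
      show che N (((i : ℕ) : ZMod N) * ((j : ℕ) : ZMod N)) = _
      have : ((i : ℕ) : ZMod N) * ((j : ℕ) : ZMod N) = (((i : ℕ) * (j : ℕ) : ℕ) : ZMod N) := by
        push_cast; ring
      rw [this, che_natCast, pow_mul]
    rw [hsub, Matrix.det_vandermonde_ne_zero_iff]
    intro i j h
    exact Fin.ext ((zeta_prim N).pow_inj i.isLt j.isLt h)
  have hdet := congrArg Matrix.det key
  rw [Matrix.det_mul, Matrix.det_mul, Matrix.det_diagonal, mul_comm W.det] at hdet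
  exact mul_right_cancel₀ hWdet hdet

end Stmt5Aux

open Stmt5Aux

/-- The resonance matrix of the `(q+1)`-regular hyperbolic cylinder with central cycle of
length `N` is the circulant matrix with first row
`[(q-1)/(2qμ) - (μ+μ⁻¹)/2, 1/(2√q), 0, …, 0, 1/(2√q)]`; its determinant is the product
of `(q-1)/(2qμ) - (μ+μ⁻¹)/2 + (1/√q)·cos(2πj/N)`, and it vanishes exactly at
`μ = (1/√q)·e^{2πij/N}`. -/
theorem stmt_5 (q : ℕ) (hq : 2 ≤ q) (N : ℕ) [NeZero N] (hN : 1 ≤ N)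
    (μ : ℂ) (hμ : μ ≠ 0) :
    let sq : ℂ := (Real.sqrt q : ℝ)
    let α : ℂ := ((q : ℂ) - 1) / (2 * q * μ) - (μ + μ⁻¹) / 2
    let β : ℂ := 1 / (2 * sq)
    let v : ZMod N → ℂ := fun k =>
      (if k = 0 then α else 0) + (if k = 1 then β else 0) + (if k = -1 then β else 0)
    (Matrix.circulant v).det =
        ∏ j ∈ Finset.range N,
          (α + (1 / sq) * (Real.cos (2 * π * j / N) : ℝ)) ∧
      ((Matrix.circulant v).det = 0 ↔
        ∃ j < N, μ = (1 / sq) * Complex.exp (2 * π * Complex.I * j / N)) := by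
  intro sq α β v
  have hα : α = ((q : ℂ) - 1) / (2 * q * μ) - (μ + μ⁻¹) / 2 := rfl
  have hβ : β = 1 / (2 * sq) := rfl
  have hNR : (N : ℝ) ≠ 0 := Nat.cast_ne_zero.mpr (NeZero.ne N)
  have hNC : (N : ℂ) ≠ 0 := Nat.cast_ne_zero.mpr (NeZero.ne N)
  have hq0 : (0 : ℝ) ≤ (q : ℝ) := by positivity
  have hqpos : (0 : ℝ) < (q : ℝ) := by exact_mod_cast Nat.lt_of_lt_of_le Nat.zero_lt_two hq
  have hsqR : Real.sqrt q ≠ 0 := ne_of_gt (Real.sqrt_pos.mpr hqpos)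
  have hsq : sq ≠ 0 := Complex.ofReal_ne_zero.mpr hsqR
  have hsq2 : sq * sq = (q : ℂ) := by
    show ((Real.sqrt q : ℝ) : ℂ) * ((Real.sqrt q : ℝ) : ℂ) = _
    rw [← Complex.ofReal_mul, Real.mul_self_sqrt hq0]
    norm_num
  have hqC : (q : ℂ) ≠ 0 := by rw [← hsq2]; exact mul_ne_zero hsq hsq
  -- expressing the circulant eigenvalue at (n : ZMod N) via cosine
  have hche : ∀ n : ℕ, che N ((n : ZMod N)) = Complex.exp (((2 * π * n / N : ℝ) : ℂ) * Complex.I) := by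
    intro n
    rw [che_natCast, zeta, ← Complex.exp_nat_mul]
    congr 1
    push_cast
    field_simp
  have hcheneg : ∀ n : ℕ,
      che N (-(n : ZMod N)) = Complex.exp (-(((2 * π * n / N : ℝ) : ℂ) * Complex.I)) := by
    intro n
    rw [che_neg, hche, ← Complex.exp_neg]
  have hlam : ∀ n : ℕ, (∑ m : ZMod N, v m * che N (-(m * (n : ZMod N))))
      = α + (1 / sq) * ((Real.cos (2 * π * n / N) : ℝ) : ℂ) := by
    intro n
    have hv : v = fun k : ZMod N =>
        (if k = 0 then α else 0) + (if k = 1 then β else 0) + (if k = -1 then β else 0) := rfl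
    calc (∑ m : ZMod N, v m * che N (-(m * (n : ZMod N))))
        = α * che N (-(0 * (n : ZMod N))) + β * che N (-(1 * (n : ZMod N)))
            + β * che N (-(-1 * (n : ZMod N))) := by
          rw [hv]
          simp only [add_mul, Finset.sum_add_distrib, ite_mul, zero_mul, Finset.sum_ite_eq',
            Finset.mem_univ, if_true]
      _ = α + β * (che N (-(n : ZMod N)) + che N ((n : ZMod N))) := by
          rw [zero_mul, neg_zero, che_zero, one_mul, neg_mul, one_mul, neg_neg]
          ring
      _ = α + (1 / sq) * ((Real.cos (2 * π * n / N) : ℝ) : ℂ) := by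
          rw [hcheneg, hche, hβ, Complex.ofReal_cos]
          have h2c : Complex.exp (-(((2 * π * n / N : ℝ) : ℂ) * Complex.I))
              + Complex.exp (((2 * π * n / N : ℝ) : ℂ) * Complex.I)
              = 2 * Complex.cos ((2 * π * n / N : ℝ) : ℂ) := by
            have h := Complex.two_cos ((2 * π * n / N : ℝ) : ℂ)
            rw [neg_mul] at h
            rw [add_comm]
            exact h.symm
          rw [h2c]
          field_simp
  have hdet : (Matrix.circulant v).det
      = ∏ j ∈ Finset.range N, (α + (1 / sq) * ((Real.cos (2 * π * j / N) : ℝ) : ℂ)) := by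
    rw [det_circulant_eq]
    rw [← Equiv.prod_comp (finEquiv N) (fun j : ZMod N => ∑ m : ZMod N, v m * che N (-(m * j)))]
    rw [show (∏ i : Fin N, ∑ m : ZMod N, v m * che N (-(m * finEquiv N i)))
        = ∏ i : Fin N, (fun n : ℕ => ∑ m : ZMod N, v m * che N (-(m * (n : ZMod N)))) (i : ℕ)
        from rfl]
    rw [Fin.prod_univ_eq_prod_range (fun n : ℕ => ∑ m : ZMod N, v m * che N (-(m * (n : ZMod N)))) N]
    exact Finset.prod_congr rfl fun n _ => hlam n
  have key : ∀ n : ℕ, α + (1 / sq) * ((Real.cos (2 * π * n / N) : ℝ) : ℂ)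
      = -((μ - (1 / sq) * Complex.exp (((2 * π * n / N : ℝ) : ℂ) * Complex.I))
          * (μ - (1 / sq) * Complex.exp (-(((2 * π * n / N : ℝ) : ℂ) * Complex.I)))) / (2 * μ) := by
    intro n
    set x : ℂ := ((2 * π * n / N : ℝ) : ℂ) with hx
    set E := Complex.exp (x * Complex.I) with hE
    have hE0 : E ≠ 0 := Complex.exp_ne_zero _
    have hEneg : Complex.exp (-(x * Complex.I)) = E⁻¹ := by rw [Complex.exp_neg]
    have hcos : ((Real.cos (2 * π * n / N) : ℝ) : ℂ) = (E + E⁻¹) / 2 := by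
      rw [Complex.ofReal_cos]
      have h := Complex.two_cos x
      rw [neg_mul, Complex.exp_neg] at h
      rw [← hx]
      linear_combination h / 2
    rw [hα, hcos, hEneg, ← hsq2]
    have h1 : sq * sq⁻¹ = 1 := mul_inv_cancel₀ hsq
    have h2 : μ * μ⁻¹ = 1 := mul_inv_cancel₀ hμ
    have h3 : E * E⁻¹ = 1 := mul_inv_cancel₀ hE0
    linear_combination ((μ⁻¹ / 2) * (sq * sq⁻¹ + 1)) * h1
      + (μ / 2 - sq⁻¹ * (E + E⁻¹) / 2) * h2 + (sq⁻¹ ^ 2 * μ⁻¹ / 2) * h3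
  refine ⟨hdet, ?_⟩
  rw [hdet, Finset.prod_eq_zero_iff]
  constructor
  · rintro ⟨n, hn, h0⟩
    rw [Finset.mem_range] at hn
    rw [key n] at h0
    have h2μ : (2 : ℂ) * μ ≠ 0 := by simp [hμ]
    rw [div_eq_zero_iff] at h0
    have hAB := h0.resolve_right h2μ
    rw [neg_eq_zero, mul_eq_zero] at hAB
    rcases hAB with h | h
    · rw [sub_eq_zero] at h
      refine ⟨n, hn, ?_⟩
      rw [h]
      congr 2
      push_cast
      ring
    · rw [sub_eq_zero] at h
      rcases Nat.eq_zero_or_pos n with rfl | hn0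
      · refine ⟨0, Nat.lt_of_lt_of_le Nat.zero_lt_one hN, ?_⟩
        rw [h]
        congr 2
        push_cast
        ring
      · refine ⟨N - n, by omega, ?_⟩
        have hcast : ((N - n : ℕ) : ℂ) = (N : ℂ) - n := by
          push_cast [Nat.cast_sub hn.le]
          ring
        have hexp : Complex.exp (2 * π * Complex.I * ((N - n : ℕ) : ℂ) / N)
            = Complex.exp (-(((2 * π * n / N : ℝ) : ℂ) * Complex.I)) := by
          rw [hcast]
          rw [show 2 * (π : ℂ) * Complex.I * ((N : ℂ) - n) / N
              = 2 * π * Complex.I + -(((2 * π * n / N : ℝ) : ℂ) * Complex.I) by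
            push_cast
            field_simp
            ring]
          rw [Complex.exp_add, Complex.exp_two_pi_mul_I, one_mul]
        rw [h, ← hexp]
  · rintro ⟨j, hj, hμeq⟩
    refine ⟨j, Finset.mem_range.mpr hj, ?_⟩
    rw [key j]
    have hz : μ - (1 / sq) * Complex.exp (((2 * π * j / N : ℝ) : ℂ) * Complex.I) = 0 := by
      rw [hμeq, sub_eq_zero]
      congr 2
      push_cast
      ring
    rw [hz, zero_mul, neg_zero, zero_div]
end

section
/- Let q ≥ 2 be a real number, N ≥ 0, and μ ∈ ℂ with |μ| > q^{1/2 - N} and μ ∉ {1,-1}. Then the two Schur sums S₁ = sup_{k₁≥1} Σ_{k₂≥1} |q^{-N(k₁+k₂)}·(√q/μ)^{|k₁-k₂|}·q^{min(k₁,k₂)}|·q^{-k₂} and S₂ (the same with the roles of k₁,k₂ swapped) are finite. -/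
/-- Geometric Schur sum bound: any `f` dominated by `ρ^{|a - n|}` has a sum at most
`2/(1-ρ)`. -/
lemma geom_schur (ρ : ℝ) (hρ0 : 0 ≤ ρ) (hρ1 : ρ < 1) (f : ℕ → ℝ)
    (hf0 : ∀ n, 0 ≤ f n) (a : ℤ) (hf : ∀ n : ℕ, f n ≤ ρ ^ (a - n).natAbs) :
    ∃ s ≤ 2 * (1 - ρ)⁻¹, HasSum f s := by
  have hsum : Summable (fun n : ℕ => ρ ^ n) := summable_geometric_of_lt_one hρ0 hρ1
  have hpow0 : ∀ m : ℕ, (0 : ℝ) ≤ ρ ^ m := fun m => pow_nonneg hρ0 m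
  have hbound : ∀ u : Finset ℕ, ∑ n ∈ u, f n ≤ 2 * (1 - ρ)⁻¹ := by
    intro u
    have h1 : ∑ n ∈ u, f n ≤ ∑ n ∈ u, ρ ^ (a - n).natAbs :=
      Finset.sum_le_sum fun n _ => hf n
    set g : ℕ → ℝ := fun n => ρ ^ (a - n).natAbs with hg
    have hsplit := Finset.sum_filter_add_sum_filter_not u (fun n : ℕ => (n : ℤ) ≤ a) g
    set u₁ := u.filter (fun n : ℕ => (n : ℤ) ≤ a) with hu₁
    set u₂ := u.filter (fun n : ℕ => ¬ ((n : ℤ) ≤ a)) with hu₂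
    have e₁ : ∑ n ∈ u₁, g n ≤ (1 - ρ)⁻¹ := by
      have hinj : ∀ x ∈ u₁, ∀ y ∈ u₁, (a - x).toNat = (a - y).toNat → x = y := by
        intro x hx y hy hxy
        have hx' : (x : ℤ) ≤ a := (Finset.mem_filter.mp hx).2
        have hy' : (y : ℤ) ≤ a := (Finset.mem_filter.mp hy).2
        omega
      have him := (Finset.sum_image (g := fun n : ℕ => (a - (n:ℤ)).toNat) (f := fun m : ℕ => ρ ^ m) hinj)
      have heq : ∑ n ∈ u₁, g n = ∑ m ∈ u₁.image (fun n : ℕ => (a - (n:ℤ)).toNat), ρ ^ m := by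
        rw [him]
        refine Finset.sum_congr rfl fun n hn => ?_
        have hn' : (n : ℤ) ≤ a := (Finset.mem_filter.mp hn).2
        have : (a - n).natAbs = (a - n).toNat := by omega
        simp [hg, this]
      rw [heq, ← tsum_geometric_of_lt_one hρ0 hρ1]
      exact Summable.sum_le_tsum _ (fun m _ => hpow0 m) hsum
    have e₂ : ∑ n ∈ u₂, g n ≤ (1 - ρ)⁻¹ := by
      have hinj : ∀ x ∈ u₂, ∀ y ∈ u₂, ((x : ℤ) - a).toNat = ((y : ℤ) - a).toNat → x = y := by
        intro x hx y hy hxy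
        have hx' : ¬ ((x : ℤ) ≤ a) := (Finset.mem_filter.mp hx).2
        have hy' : ¬ ((y : ℤ) ≤ a) := (Finset.mem_filter.mp hy).2
        omega
      have him := (Finset.sum_image (g := fun n : ℕ => ((n:ℤ) - a).toNat) (f := fun m : ℕ => ρ ^ m) hinj)
      have heq : ∑ n ∈ u₂, g n = ∑ m ∈ u₂.image (fun n : ℕ => ((n:ℤ) - a).toNat), ρ ^ m := by
        rw [him]
        refine Finset.sum_congr rfl fun n hn => ?_
        have hn' : ¬ ((n : ℤ) ≤ a) := (Finset.mem_filter.mp hn).2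
        have : (a - n).natAbs = ((n : ℤ) - a).toNat := by omega
        simp [hg, this]
      rw [heq, ← tsum_geometric_of_lt_one hρ0 hρ1]
      exact Summable.sum_le_tsum _ (fun m _ => hpow0 m) hsum
    calc ∑ n ∈ u, f n ≤ ∑ n ∈ u, g n := h1
      _ = ∑ n ∈ u₁, g n + ∑ n ∈ u₂, g n := hsplit.symm
      _ ≤ (1 - ρ)⁻¹ + (1 - ρ)⁻¹ := add_le_add e₁ e₂
      _ = 2 * (1 - ρ)⁻¹ := by ring
  have hS : Summable f := summable_of_sum_le hf0 hbound
  exact ⟨∑' n, f n, Summable.tsum_le_of_sum_le hS hbound, hS.hasSum⟩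

lemma key_bound (q N aa : ℝ) (hq : 2 ≤ q) (hN : 0 ≤ N) (ha : 0 < aa) (k₁ k₂ : ℕ) :
    (q ^ (-(N * ((k₁ : ℝ) + (k₂ : ℝ)))) *
        (Real.sqrt q / aa) ^ ((k₁ : ℤ) - (k₂ : ℤ)).natAbs *
        q ^ ((min k₁ k₂ : ℕ) : ℝ)) * q ^ (-(k₂ : ℝ)) ≤
      (max (Real.sqrt q * q ^ (-N : ℝ) / aa) (q ^ (-N : ℝ) / (Real.sqrt q * aa)))
        ^ ((k₁ : ℤ) - (k₂ : ℤ)).natAbs := by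
  have hq0 : (0 : ℝ) < q := by linarith
  have hq1 : (1 : ℝ) < q := by linarith
  have hsq : 0 < Real.sqrt q := Real.sqrt_pos.mpr hq0
  set m := ((k₁ : ℤ) - (k₂ : ℤ)).natAbs with hm
  have hbase1 : 0 ≤ Real.sqrt q * q ^ (-N : ℝ) / aa := by positivity
  have hbase2 : 0 ≤ q ^ (-N : ℝ) / (Real.sqrt q * aa) := by positivity
  rcases le_total k₂ k₁ with h | h
  · -- k₂ ≤ k₁ : min = k₂, m = k₁ - k₂
    have hmin : min k₁ k₂ = k₂ := min_eq_right h
    have hmr : (m : ℝ) = (k₁ : ℝ) - k₂ := by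
      have : m = k₁ - k₂ := by omega
      rw [this]; push_cast [Nat.cast_sub h]; ring
    have hlast : q ^ ((min k₁ k₂ : ℕ) : ℝ) * q ^ (-(k₂ : ℝ)) = 1 := by
      rw [hmin, ← Real.rpow_add hq0]
      simp
    have step1 : q ^ (-(N * ((k₁ : ℝ) + (k₂ : ℝ)))) ≤ (q ^ (-N : ℝ)) ^ m := by
      have : (q ^ (-N : ℝ)) ^ m = q ^ ((-N) * (m : ℝ)) := by
        rw [← Real.rpow_natCast (q ^ (-N : ℝ)) m, ← Real.rpow_mul hq0.le]
      rw [this]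
      apply Real.rpow_le_rpow_left_iff hq1 |>.mpr
      rw [hmr]
      nlinarith [mul_nonneg hN (Nat.cast_nonneg k₂ : (0:ℝ) ≤ k₂)]
    calc (q ^ (-(N * ((k₁ : ℝ) + (k₂ : ℝ)))) * (Real.sqrt q / aa) ^ m *
            q ^ ((min k₁ k₂ : ℕ) : ℝ)) * q ^ (-(k₂ : ℝ))
        = q ^ (-(N * ((k₁ : ℝ) + (k₂ : ℝ)))) * (Real.sqrt q / aa) ^ m *
            (q ^ ((min k₁ k₂ : ℕ) : ℝ) * q ^ (-(k₂ : ℝ))) := by ring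
      _ = q ^ (-(N * ((k₁ : ℝ) + (k₂ : ℝ)))) * (Real.sqrt q / aa) ^ m := by
          rw [hlast, mul_one]
      _ ≤ (q ^ (-N : ℝ)) ^ m * (Real.sqrt q / aa) ^ m := by
          apply mul_le_mul_of_nonneg_right step1 (pow_nonneg (by positivity) m)
      _ = (Real.sqrt q * q ^ (-N : ℝ) / aa) ^ m := by
          rw [← mul_pow]; congr 1; ring
      _ ≤ _ := pow_le_pow_left₀ hbase1 (le_max_left _ _) m
  · -- k₁ ≤ k₂ : min = k₁, m = k₂ - k₁
    have hmin : min k₁ k₂ = k₁ := min_eq_left h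
    have hmr : (m : ℝ) = (k₂ : ℝ) - k₁ := by
      have : m = k₂ - k₁ := by omega
      rw [this]; push_cast [Nat.cast_sub h]; ring
    have hlast : q ^ ((min k₁ k₂ : ℕ) : ℝ) * q ^ (-(k₂ : ℝ)) = (q⁻¹) ^ m := by
      have h' : (q⁻¹) ^ m = q ^ (-(m : ℝ)) := by
        rw [← Real.rpow_natCast (q⁻¹) m, Real.inv_rpow hq0.le, ← Real.rpow_neg hq0.le]
      rw [hmin, ← Real.rpow_add hq0, h']
      congr 1
      rw [hmr]; push_cast; ring
    have step1 : q ^ (-(N * ((k₁ : ℝ) + (k₂ : ℝ)))) ≤ (q ^ (-N : ℝ)) ^ m := by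
      have : (q ^ (-N : ℝ)) ^ m = q ^ ((-N) * (m : ℝ)) := by
        rw [← Real.rpow_natCast (q ^ (-N : ℝ)) m, ← Real.rpow_mul hq0.le]
      rw [this]
      apply Real.rpow_le_rpow_left_iff hq1 |>.mpr
      rw [hmr]
      nlinarith [mul_nonneg hN (Nat.cast_nonneg k₁ : (0:ℝ) ≤ k₁)]
    calc (q ^ (-(N * ((k₁ : ℝ) + (k₂ : ℝ)))) * (Real.sqrt q / aa) ^ m *
            q ^ ((min k₁ k₂ : ℕ) : ℝ)) * q ^ (-(k₂ : ℝ))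
        = q ^ (-(N * ((k₁ : ℝ) + (k₂ : ℝ)))) * ((Real.sqrt q / aa) ^ m *
            (q ^ ((min k₁ k₂ : ℕ) : ℝ) * q ^ (-(k₂ : ℝ)))) := by ring
      _ = q ^ (-(N * ((k₁ : ℝ) + (k₂ : ℝ)))) * (Real.sqrt q / aa * q⁻¹) ^ m := by
          rw [hlast, ← mul_pow]
      _ ≤ (q ^ (-N : ℝ)) ^ m * (Real.sqrt q / aa * q⁻¹) ^ m := by
          apply mul_le_mul_of_nonneg_right step1 (pow_nonneg (by positivity) m)
      _ = (q ^ (-N : ℝ) / (Real.sqrt q * aa)) ^ m := by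
          rw [← mul_pow]; congr 1
          have hq' : Real.sqrt q * Real.sqrt q = q := Real.mul_self_sqrt hq0.le
          field_simp
          linear_combination hq'
      _ ≤ _ := pow_le_pow_left₀ hbase2 (le_max_right _ _) m

/-- Schur-test estimate for the weighted cusp resolvent kernel: for `|μ| > q^{1/2-N}`,
`μ ≠ ±1`, the two Schur sums of
`|q^{-N(k₁+k₂)}·(√q/μ)^{|k₁-k₂|}·q^{min(k₁,k₂)}|·q^{-k₂}` (rows indexed by `k₁ ≥ 1`,
columns by `k₂ ≥ 1`, and the symmetric version with the roles of `k₁, k₂` swapped)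
are finite. -/
theorem stmt_16 (q N : ℝ) (hq : 2 ≤ q) (hN : 0 ≤ N) (μ : ℂ)
    (hμ : q ^ ((1 : ℝ) / 2 - N) < ‖μ‖) (h1 : μ ≠ 1) (h2 : μ ≠ -1) :
    let T : ℕ → ℕ → ℝ := fun k₁ k₂ =>
      (q ^ (-(N * ((k₁ : ℝ) + (k₂ : ℝ)))) *
          ‖((Real.sqrt q : ℂ) / μ) ^ ((k₁ : ℤ) - (k₂ : ℤ)).natAbs‖ *
          q ^ ((min k₁ k₂ : ℕ) : ℝ)) * q ^ (-(k₂ : ℝ))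
    (∃ C : ℝ, ∀ k₁ : ℕ, 1 ≤ k₁ →
        ∃ s ≤ C, HasSum (fun k₂ : ℕ => T k₁ (k₂ + 1)) s) ∧
      ∃ C : ℝ, ∀ k₂ : ℕ, 1 ≤ k₂ →
        ∃ s ≤ C, HasSum (fun k₁ : ℕ => T (k₁ + 1) k₂) s := by
  intro T
  have hq0 : (0 : ℝ) < q := by linarith
  have hq1 : (1 : ℝ) < q := by linarith
  have hsq : 0 < Real.sqrt q := Real.sqrt_pos.mpr hq0
  set aa := ‖μ‖ with haa
  have ha0 : 0 < aa := lt_of_le_of_lt (Real.rpow_nonneg hq0.le _) hμ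
  set ρ := max (Real.sqrt q * q ^ (-N : ℝ) / aa) (q ^ (-N : ℝ) / (Real.sqrt q * aa)) with hρ
  have hρ0 : 0 ≤ ρ := le_trans (by positivity) (le_max_left _ _)
  have hsplit : Real.sqrt q * q ^ (-N : ℝ) < aa := by
    calc Real.sqrt q * q ^ (-N : ℝ) = q ^ ((1:ℝ)/2 - N) := by
          rw [Real.sqrt_eq_rpow, ← Real.rpow_add hq0]; ring_nf
      _ < aa := hμ
  have hρ1 : ρ < 1 := by
    apply max_lt
    · rw [div_lt_one ha0]; exact hsplit
    · rw [div_lt_one (by positivity)]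
      have h' : Real.sqrt q * (Real.sqrt q * q ^ (-N : ℝ)) < Real.sqrt q * aa :=
        mul_lt_mul_of_pos_left hsplit hsq
      have hss : Real.sqrt q * Real.sqrt q = q := Real.mul_self_sqrt hq0.le
      have : q * q ^ (-N : ℝ) < Real.sqrt q * aa := by nlinarith [h', hss]
      have h2' : q ^ (-N : ℝ) ≤ q * q ^ (-N : ℝ) := by
        nlinarith [Real.rpow_pos_of_pos hq0 (-N)]
      linarith
  have habs : ∀ m : ℕ, ‖((Real.sqrt q : ℂ) / μ) ^ m‖ = (Real.sqrt q / aa) ^ m := by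
    intro m
    rw [norm_pow, norm_div, Complex.norm_of_nonneg hsq.le]
  have hT0 : ∀ k₁ k₂ : ℕ, 0 ≤ T k₁ k₂ := by
    intro k₁ k₂
    have : T k₁ k₂ = (q ^ (-(N * ((k₁ : ℝ) + (k₂ : ℝ)))) *
        ‖((Real.sqrt q : ℂ) / μ) ^ ((k₁ : ℤ) - (k₂ : ℤ)).natAbs‖ *
        q ^ ((min k₁ k₂ : ℕ) : ℝ)) * q ^ (-(k₂ : ℝ)) := rfl
    rw [this]
    positivity
  have hTkey : ∀ k₁ k₂ : ℕ, T k₁ k₂ ≤ ρ ^ ((k₁ : ℤ) - (k₂ : ℤ)).natAbs := by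
    intro k₁ k₂
    have : T k₁ k₂ = (q ^ (-(N * ((k₁ : ℝ) + (k₂ : ℝ)))) *
        (Real.sqrt q / aa) ^ ((k₁ : ℤ) - (k₂ : ℤ)).natAbs *
        q ^ ((min k₁ k₂ : ℕ) : ℝ)) * q ^ (-(k₂ : ℝ)) := by
      rw [show T k₁ k₂ = (q ^ (-(N * ((k₁ : ℝ) + (k₂ : ℝ)))) *
        ‖((Real.sqrt q : ℂ) / μ) ^ ((k₁ : ℤ) - (k₂ : ℤ)).natAbs‖ *
        q ^ ((min k₁ k₂ : ℕ) : ℝ)) * q ^ (-(k₂ : ℝ)) from rfl, habs]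
    rw [this]
    exact key_bound q N aa hq hN ha0 k₁ k₂
  constructor
  · refine ⟨2 * (1 - ρ)⁻¹, fun k₁ hk₁ => ?_⟩
    apply geom_schur ρ hρ0 hρ1 _ (fun n => hT0 k₁ (n + 1)) ((k₁ : ℤ) - 1)
    intro n
    have h := hTkey k₁ (n + 1)
    rwa [show ((k₁ : ℤ) - ((n : ℕ) + 1 : ℕ)).natAbs = (((k₁ : ℤ) - 1) - n).natAbs by
      push_cast; omega] at h
  · refine ⟨2 * (1 - ρ)⁻¹, fun k₂ hk₂ => ?_⟩
    apply geom_schur ρ hρ0 hρ1 _ (fun n => hT0 (n + 1) k₂) ((k₂ : ℤ) - 1)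
    intro n
    have h := hTkey (n + 1) k₂
    rwa [show ((((n : ℕ) + 1 : ℕ) : ℤ) - (k₂ : ℤ)).natAbs = (((k₂ : ℤ) - 1) - n).natAbs by
      push_cast; omega] at h
end
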